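/- arXiv:1905.13025 — 10 statements merged into one kernel-verified Lean document; each statement's English description precedes it below -/
import Mathlib

section
/- Let n > 1 and let F : F_{2^n} → F_{2^n} be APN. Then for every x_0 ∈ F_{2^n} there exists ε ∈ F_{2^n} with ε ≠ 0 such that the (x_0,ε)-modification F' of F is not APN. -/
open scoped Classical

noncomputable instance (n : ℕ) : Fintype (GaloisField 2 n) := Fintype.ofFinite _

/-- The absolute trace of `F_{2^n}` over `F_2`. -/
noncomputable def fieldTr (n : ℕ) (x : GaloisField 2 n) : ZMod 2 :=
  Algebra.trace (ZMod 2) (GaloisField 2 n) x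

/-- `(-1)^{Tr(x)}` as an integer. -/
noncomputable def chi (n : ℕ) (x : GaloisField 2 n) : ℤ :=
  (-1) ^ (fieldTr n x).val

/-- The Walsh transform `W_F(a,b)`. -/
noncomputable def walsh (n : ℕ) (F : GaloisField 2 n → GaloisField 2 n)
    (a b : GaloisField 2 n) : ℤ :=
  ∑ x : GaloisField 2 n, chi n (b * F x + a * x)

/-- `F` is almost perfect nonlinear. -/
def IsAPN (n : ℕ) (F : GaloisField 2 n → GaloisField 2 n) : Prop :=
  ∀ a b : GaloisField 2 n, a ≠ 0 →
    Nat.card {x : GaloisField 2 n // F (x + a) + F x = b} ≤ 2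

/-- `F` is partially APN at the point `x₀`. -/
def IsPAPN (n : ℕ) (F : GaloisField 2 n → GaloisField 2 n) (x₀ : GaloisField 2 n) : Prop :=
  ∀ u v : GaloisField 2 n, F x₀ + F u + F v + F (x₀ + u + v) = 0 →
    (x₀ + u) * (x₀ + v) * (u + v) = 0

/-- The `(x₀, ε)`-modification of `F`. -/
noncomputable
def pointModify (n : ℕ) (F : GaloisField 2 n → GaloisField 2 n) (x₀ ε : GaloisField 2 n) :
    GaloisField 2 n → GaloisField 2 n :=
  fun x => if x = x₀ then F x₀ + ε else F x

/-- `E_F(a,b) = (-1)^{Tr(a x₀ + b y₀)} (1 - (-1)^{Tr(b ε)})`. -/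
noncomputable def EF (n : ℕ) (F : GaloisField 2 n → GaloisField 2 n)
    (x₀ ε a b : GaloisField 2 n) : ℤ :=
  chi n (a * x₀ + b * F x₀) * (1 - chi n (b * ε))

/-!
Fix `a = 1` and a point `y ∉ {x₀, x₀ + 1}` (there is one as soon as `n > 1`). In characteristic
two the derivative `D F x = F (x + a) + F x` satisfies `D F (x + a) = D F x`, so a single equality
`D F y = D F x₀` already produces three solutions `x₀, x₀ + a, y` of `D F x = D F x₀`. For APN `F`
this forbids `D F y = D F x₀`, so `ε = D F y + D F x₀` is nonzero, and this `ε` is exactly the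
shift at `x₀` that makes the modification satisfy `D F' x₀ = D F' y`.
-/

variable {n : ℕ}

lemma two_lt_card_galoisField (hn : 1 < n) : 2 < Fintype.card (GaloisField 2 n) := by
  rw [← Nat.card_eq_fintype_card, GaloisField.card 2 n (by omega)]
  calc 2 < 2 ^ 2 := by norm_num
    _ ≤ 2 ^ n := Nat.pow_le_pow_right two_pos hn

lemma exists_ne_ne_of_two_lt_card {α : Type*} [Fintype α] [DecidableEq α]
    (h : 2 < Fintype.card α) (a b : α) : ∃ c, c ≠ a ∧ c ≠ b := by
  have hlt : ({a, b} : Finset α).card < Finset.univ.card :=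
    (Finset.card_le_two).trans_lt h
  obtain ⟨c, -, hc⟩ := Finset.exists_mem_notMem_of_card_lt_card hlt
  exact ⟨c, by simpa [not_or] using hc⟩

lemma derivative_add_self {R : Type*} [Semiring R] [CharP R 2] (F : R → R) (a x : R) :
    F (x + a + a) + F (x + a) = F (x + a) + F x := by
  rw [CharTwo.add_cancel_right, add_comm]

lemma not_isAPN_of_derivative_eq {G : GaloisField 2 n → GaloisField 2 n}
    {a x y : GaloisField 2 n} (ha : a ≠ 0) (hyx : y ≠ x) (hyxa : y ≠ x + a)
    (h : G (y + a) + G y = G (x + a) + G x) : ¬ IsAPN n G := by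
  intro hG
  have hxa : x ≠ x + a := fun h' => ha (by simpa using h')
  have hthree : 2 < Nat.card {z // G (z + a) + G z = G (x + a) + G x} :=
    (Set.two_lt_ncard_iff).2
      ⟨x, x + a, y, rfl, derivative_add_self G a x, h, hxa, hyx.symm, hyxa.symm⟩
  exact (hG a _ ha).not_gt hthree

lemma pointModify_self (F : GaloisField 2 n → GaloisField 2 n) (x₀ ε : GaloisField 2 n) :
    pointModify n F x₀ ε x₀ = F x₀ + ε := if_pos rfl

lemma pointModify_of_ne (F : GaloisField 2 n → GaloisField 2 n) {x₀ x : GaloisField 2 n}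
    (ε : GaloisField 2 n) (hx : x ≠ x₀) : pointModify n F x₀ ε x = F x := if_neg hx

lemma not_isAPN_pointModify (F : GaloisField 2 n → GaloisField 2 n) {a x₀ y : GaloisField 2 n}
    (ha : a ≠ 0) (hy : y ≠ x₀) (hya : y ≠ x₀ + a) :
    ¬ IsAPN n (pointModify n F x₀ (F (y + a) + F y + (F (x₀ + a) + F x₀))) := by
  set ε := F (y + a) + F y + (F (x₀ + a) + F x₀)
  have hx₀a : x₀ + a ≠ x₀ := fun h => ha (by simpa using h)
  have hya' : y + a ≠ x₀ := fun h => hya (by rw [← h, CharTwo.add_cancel_right])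
  refine not_isAPN_of_derivative_eq ha hy hya ?_
  rw [pointModify_of_ne F ε hya', pointModify_of_ne F ε hy, pointModify_of_ne F ε hx₀a,
    pointModify_self]
  linear_combination -CharTwo.add_self_eq_zero (F (x₀ + a) + F x₀)

theorem apn_modification_not_apn (n : ℕ) (hn : 1 < n)
    (F : GaloisField 2 n → GaloisField 2 n) (hF : IsAPN n F) (x₀ : GaloisField 2 n) :
    ∃ ε : GaloisField 2 n, ε ≠ 0 ∧ ¬ IsAPN n (pointModify n F x₀ ε) := by
  obtain ⟨y, hy, hy1⟩ := exists_ne_ne_of_two_lt_card (two_lt_card_galoisField hn) x₀ (x₀ + 1)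
  refine ⟨F (y + 1) + F y + (F (x₀ + 1) + F x₀), fun hε => ?_,
    not_isAPN_pointModify F one_ne_zero hy hy1⟩
  exact not_isAPN_of_derivative_eq one_ne_zero hy hy1 (CharTwo.add_eq_zero.mp hε) hF
end

section
/- Let F : F_{2^n} → F_{2^n} be APN with F(0) = 0, let ε ∈ F_{2^n} with ε ≠ 0, and let F' be the (0,ε)-modification of F (so x_0 = 0 and y_0 = F(0) = 0). Then F' is APN if and only if Σ_{a,b ∈ F_{2^n}} W_F(a,b)^3 · (−1)^{Tr(b·ε)} = 0. -/
/-!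
Expanding `W_F(a,b)^3` and summing over `a` and `b`, orthogonality of the additive character
`x ↦ (-1)^{Tr x}` turns the sum into `2^{2n}` times the number of pairs `(x, y)` with
`F x + F y + F (x + y) = ε`. On the other side, changing `F` at the single point `x₀` changes the
derivative `F (x + a) + F x` only on the pair `{x₀, x₀ + a}`, by `ε`. Since `F` is APN, the
modified function can fail to be APN only through such a pair colliding with a pair `{y, y + a}`
avoiding `x₀`, and this collision is exactly `F x₀ + F y + F (y + a) + F (x₀ + a) = ε`.
-/

open scoped Classical

lemma AddChar.map_sum_eq_prod {ι A M : Type*} [AddCommMonoid A] [CommMonoid M]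
    (ψ : AddChar A M) (s : Finset ι) (f : ι → A) : ψ (∑ i ∈ s, f i) = ∏ i ∈ s, ψ (f i) := by
  induction s using Finset.cons_induction with
  | empty => simp
  | cons i s hi ih => rw [Finset.sum_cons, Finset.prod_cons, ψ.map_add_eq_mul, ih]

open Finset

lemma card_triples_eq_zero_iff {K : Type*} [CommRing K] [CharP K 2] [Fintype K]
    (F : K → K) (ε : K) :
    #{p : Fin 3 → K | ∑ i, p i = 0 ∧ ∑ i, F (p i) = ε} = 0 ↔
      ∀ u v, F u + F v + F (u + v) ≠ ε := by
  simp only [card_eq_zero, filter_eq_empty_iff, mem_univ, true_implies, not_and,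
    Fin.sum_univ_three]
  constructor
  · intro h u v huv
    exact h (x := ![u, v, u + v]) (by simp [CharTwo.add_self_eq_zero]) (by simpa using huv)
  · intro h p hp
    rw [show p 2 = p 0 + p 1 by grind]
    exact h _ _

section

variable {n : ℕ}

local notation "G" => GaloisField 2 n

variable (n) in
noncomputable def traceChar : AddChar G ℤ :=
  (AddChar.zmodChar 2 (by norm_num : (-1 : ℤ) ^ 2 = 1)).compAddMonoidHom
    (Algebra.trace (ZMod 2) G).toAddMonoidHom

lemma traceChar_apply (x : G) : traceChar n x = chi n x := rfl

lemma traceChar_isPrimitive : (traceChar n).IsPrimitive := by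
  refine AddChar.IsPrimitive.of_ne_one fun h => ?_
  obtain ⟨x, hx⟩ := DFunLike.ne_iff.mp (Algebra.trace_ne_zero (ZMod 2) G)
  have h1 := DFunLike.congr_fun h x
  simp only [traceChar, AddChar.compAddMonoidHom_apply, LinearMap.toAddMonoidHom_coe,
    AddChar.one_apply, Fin.eq_one_of_ne_zero _ hx] at h1
  exact absurd h1 (by decide)

lemma sum_chi_mul (s : G) :
    ∑ x : G, chi n (x * s) = if s = 0 then (Fintype.card G : ℤ) else 0 := by
  simpa [traceChar_apply, apply_ite] using AddChar.sum_mulShift s traceChar_isPrimitive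

lemma sum_walsh_pow_mul_chi (F : G → G) (k : ℕ) (ε : G) :
    ∑ a : G, ∑ b : G, walsh n F a b ^ k * chi n (b * ε) =
      (Fintype.card G : ℤ) ^ 2 * #{p : Fin k → G | ∑ i, p i = 0 ∧ ∑ i, F (p i) = ε} := by
  have hterm : ∀ a b : G, walsh n F a b ^ k * chi n (b * ε) =
      ∑ p : Fin k → G, chi n (a * ∑ i, p i) * chi n (b * (∑ i, F (p i) + ε)) := by
    intro a b
    simp only [walsh, Fintype.sum_pow, sum_mul, ← traceChar_apply, ← AddChar.map_sum_eq_prod,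
      ← AddChar.map_add_eq_mul]
    refine sum_congr rfl fun p _ => congrArg _ ?_
    simp only [mul_add, mul_sum, sum_add_distrib]
    ring
  calc ∑ a : G, ∑ b : G, walsh n F a b ^ k * chi n (b * ε)
      = ∑ p : Fin k → G, (∑ a : G, chi n (a * ∑ i, p i)) *
          ∑ b : G, chi n (b * (∑ i, F (p i) + ε)) := by
        simp only [hterm, sum_mul_sum]
        rw [sum_congr rfl fun a _ => sum_comm, sum_comm]
    _ = ∑ p : Fin k → G,
          if ∑ i, p i = 0 ∧ ∑ i, F (p i) = ε then (Fintype.card G : ℤ) ^ 2 else 0 := by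
        simp only [sum_chi_mul, CharTwo.add_eq_zero, ite_zero_mul_ite_zero, sq]
    _ = _ := by
        rw [sum_ite, sum_const_zero, add_zero, sum_const, nsmul_eq_mul, mul_comm]

lemma isAPN_iff_forall_eq_or_eq_add (F : G → G) :
    IsAPN n F ↔
      ∀ a x y : G, a ≠ 0 → F (x + a) + F x = F (y + a) + F y → y = x ∨ y = x + a := by
  simp only [IsAPN, Nat.card_eq_fintype_card, Fintype.card_subtype]
  constructor
  · intro hF a x y ha hxy
    by_contra! hy
    have hsub : {x, x + a, y} ⊆ ({z | F (z + a) + F z = F (x + a) + F x} : Finset G) := by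
      intro z hz
      simp only [mem_insert, mem_singleton, mem_filter, mem_univ, true_and] at hz ⊢
      rcases hz with rfl | rfl | rfl <;> grind
    have hthree : #{x, x + a, y} = 3 :=
      card_eq_three.mpr ⟨x, x + a, y, by grind, by grind, by grind, rfl⟩
    have := (card_le_card hsub).trans (hF a _ ha)
    omega
  · intro h a b ha
    by_cases hb : ∃ x, F (x + a) + F x = b
    · obtain ⟨x, rfl⟩ := hb
      refine (card_le_card fun y hy => ?_).trans (card_le_two (a := x) (b := x + a))
      simpa using h a x y ha (mem_filter.mp hy).2.symm
    · push Not at hb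
      simp [filter_false_of_mem fun x _ => hb x]

lemma pointModify_add_add (F : G → G) (x₀ ε : G) {a : G} (ha : a ≠ 0) (x : G) :
    pointModify n F x₀ ε (x + a) + pointModify n F x₀ ε x =
      F (x + a) + F x + if x = x₀ ∨ x + a = x₀ then ε else 0 := by
  unfold pointModify
  split_ifs <;> grind

lemma isAPN_pointModify_iff {F : G → G} {x₀ ε : G} (hF : IsAPN n F) (hε : ε ≠ 0) :
    IsAPN n (pointModify n F x₀ ε) ↔ ∀ u v, F x₀ + F u + F v + F (x₀ + u + v) ≠ ε := by
  refine ⟨fun h u v huv => ?_, fun h => ?_⟩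
  · have hu : u ≠ x₀ := by rintro rfl; grind
    have hv : v ≠ x₀ := by rintro rfl; grind
    have huv' : u ≠ v := by rintro rfl; grind
    have hua : x₀ + u ≠ 0 := by grind
    -- `huv` says that `{x₀, u}` and `{v, x₀ + u + v}` have the same derivative in direction `x₀ + u`
    -- for the modified function.
    have := (isAPN_iff_forall_eq_or_eq_add _).mp h (x₀ + u) x₀ v hua
    rw [pointModify_add_add F x₀ ε hua, pointModify_add_add F x₀ ε hua] at this
    clear h
    grind
  · rw [isAPN_iff_forall_eq_or_eq_add] at hF ⊢
    intro a x y ha hxy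
    rw [pointModify_add_add F x₀ ε ha, pointModify_add_add F x₀ ε ha] at hxy
    split_ifs at hxy with hx hy hy
    · clear h hF; grind
    · refine absurd ?_ (h y (y + a))
      clear h hF; grind
    · refine absurd ?_ (h x (x + a))
      clear h hF; grind
    · exact hF a x y ha (by simpa using hxy)

end

theorem modification_at_zero_apn_iff (n : ℕ) (F : GaloisField 2 n → GaloisField 2 n)
    (hF : IsAPN n F) (h0 : F 0 = 0) (ε : GaloisField 2 n) (hε : ε ≠ 0) :
    IsAPN n (pointModify n F 0 ε) ↔
      ∑ a : GaloisField 2 n, ∑ b : GaloisField 2 n, walsh n F a b ^ 3 * chi n (b * ε) = 0 := by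
  have hq : (Fintype.card (GaloisField 2 n) : ℤ) ^ 2 ≠ 0 := by positivity
  rw [isAPN_pointModify_iff hF hε, sum_walsh_pow_mul_chi, mul_eq_zero, or_iff_right hq,
    Nat.cast_eq_zero, card_triples_eq_zero_iff]
  simp [h0]
end

section
/- Let F : F_{2^n} → F_{2^n} be APN, let x_0 ∈ F_{2^n}, ε ∈ F_{2^n} with ε ≠ 0, and let F' be the (x_0,ε)-modification of F. If F' is x_0-APN, then F' is APN. -/
open scoped Classical

theorem papn_modification_is_apn (n : ℕ) (F : GaloisField 2 n → GaloisField 2 n) (hF : IsAPN n F)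
    (x₀ ε : GaloisField 2 n) (hε : ε ≠ 0)
    (h : IsPAPN n (pointModify n F x₀ ε) x₀) :
    IsAPN n (pointModify n F x₀ ε) := by
  classical
  intro a b ha
  by_contra hc
  push_neg at hc
  set F' := pointModify n F x₀ ε with hF'
  -- the solution predicate
  set sol : GaloisField 2 n → Prop := fun x => F' (x + a) + F' x = b with hsol
  have hchar : ∀ x : GaloisField 2 n, x + x = 0 := fun x => CharTwo.add_self_eq_zero x
  have haa : ∀ x : GaloisField 2 n, x + a + a = x := by
    intro x; rw [add_assoc, hchar, add_zero]
  have hpair : ∀ x, sol x → sol (x + a) := by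
    intro x hx
    simp only [hsol] at hx ⊢
    rw [haa, add_comm]
    exact hx
  have hne : ∀ x y : GaloisField 2 n, x + y = 0 → x = y := by
    intro x y hxy
    have := CharTwo.add_eq_iff_eq_add.mp hxy
    rwa [zero_add] at this
  -- extract three distinct solutions
  rw [Nat.card_eq_fintype_card, Fintype.card_subtype, Finset.two_lt_card_iff] at hc
  obtain ⟨x1, x2, x3, hx1, hx2, hx3, h12, h13, h23⟩ := hc
  have s1 : sol x1 := (Finset.mem_filter.mp hx1).2
  have s2 : sol x2 := (Finset.mem_filter.mp hx2).2
  have s3 : sol x3 := (Finset.mem_filter.mp hx3).2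
  -- off the modified pair, F' agrees with F
  have hFeq : ∀ x : GaloisField 2 n, x ≠ x₀ → F' x = F x := by
    intro x hx
    simp only [hF', pointModify, if_neg hx]
  have hFsol : ∀ x, x ≠ x₀ → x ≠ x₀ + a → sol x → F (x + a) + F x = b := by
    intro x hx0 hx1 hx
    have hxa : x + a ≠ x₀ := by
      intro hh
      apply hx1
      rw [← hh, haa]
    rw [hsol] at hx
    rwa [hFeq x hx0, hFeq _ hxa] at hx
  -- x₀ is a solution
  have hx₀sol : sol x₀ := by
    by_cases e1 : x1 = x₀ ∨ x1 = x₀ + a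
    · rcases e1 with e1 | e1
      · rwa [e1] at s1
      · have := hpair x1 s1
        rwa [e1, haa] at this
    · by_cases e2 : x2 = x₀ ∨ x2 = x₀ + a
      · rcases e2 with e2 | e2
        · rwa [e2] at s2
        · have := hpair x2 s2
          rwa [e2, haa] at this
      · by_cases e3 : x3 = x₀ ∨ x3 = x₀ + a
        · rcases e3 with e3 | e3
          · rwa [e3] at s3
          · have := hpair x3 s3
            rwa [e3, haa] at this
        · push_neg at e1 e2 e3
          exfalso
          have hcard : 2 < Nat.card {x : GaloisField 2 n // F (x + a) + F x = b} := by
            rw [Nat.card_eq_fintype_card, Fintype.card_subtype, Finset.two_lt_card_iff]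
            exact ⟨x1, x2, x3,
              Finset.mem_filter.mpr ⟨Finset.mem_univ _, hFsol x1 e1.1 e1.2 s1⟩,
              Finset.mem_filter.mpr ⟨Finset.mem_univ _, hFsol x2 e2.1 e2.2 s2⟩,
              Finset.mem_filter.mpr ⟨Finset.mem_univ _, hFsol x3 e3.1 e3.2 s3⟩,
              h12, h13, h23⟩
          exact absurd (hF a b ha) (not_le.mpr hcard)
  -- find a solution away from x₀ and x₀ + a
  obtain ⟨w, sw, hw0, hw1⟩ : ∃ w, sol w ∧ w ≠ x₀ ∧ w ≠ x₀ + a := by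
    by_cases e1 : x1 = x₀ ∨ x1 = x₀ + a
    · by_cases e2 : x2 = x₀ ∨ x2 = x₀ + a
      · rcases e1 with e1 | e1 <;> rcases e2 with e2 | e2
        · exact absurd (e1.trans e2.symm) h12
        · refine ⟨x3, s3, ?_, ?_⟩
          · intro hh; exact h13 (e1.trans hh.symm)
          · intro hh; exact h23 (e2.trans hh.symm)
        · refine ⟨x3, s3, ?_, ?_⟩
          · intro hh; exact h23 (e2.trans hh.symm)
          · intro hh; exact h13 (e1.trans hh.symm)
        · exact absurd (e1.trans e2.symm) h12
      · push_neg at e2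
        exact ⟨x2, s2, e2.1, e2.2⟩
    · push_neg at e1
      exact ⟨x1, s1, e1.1, e1.2⟩
  -- apply the partial APN hypothesis
  have hsum : F' x₀ + F' w + F' (w + a) + F' (x₀ + w + (w + a)) = 0 := by
    have hx0a : x₀ + w + (w + a) = x₀ + a := by
      rw [add_assoc, ← add_assoc w w a, hchar, zero_add]
    rw [hx0a]
    have P : F' (x₀ + a) + F' x₀ = b := hx₀sol
    have Q : F' (w + a) + F' w = b := sw
    have h2 : b + b = (0 : GaloisField 2 n) := hchar b
    linear_combination P + Q + h2
  have hz := h w (w + a) hsum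
  rcases mul_eq_zero.mp hz with hz | hz
  · rcases mul_eq_zero.mp hz with hz | hz
    · exact hw0 (hne _ _ hz).symm
    · exact hw1 (by rw [hne _ _ hz]; exact (haa w).symm)
  · rw [← add_assoc, hchar, zero_add] at hz
    exact ha hz
end

section
/- Let F : F_{2^n} → F_{2^n} be APN with F(0) = 0, let x_0 ∈ F_{2^n} with x_0 ≠ 0, ε ∈ F_{2^n} with ε ≠ 0, y_1 = F(x_0) + ε, and let F' be the (x_0,ε)-modification of F. Then Σ_{a,b ∈ F_{2^n}} W_{F'}(a,b)^3 = 2^{2n+1}·(3·2^{n−1} − 1) + 3·2^{2n}·|S_{x_0,y_1}|. -/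
open scoped Classical

-- ## Auxiliary lemmas

lemma chi_add {n : ℕ} (x y : GaloisField 2 n) : chi n (x + y) = chi n x * chi n y := by
  have h : ∀ a b : ZMod 2, ((-1 : ℤ)) ^ ((a + b).val) = (-1) ^ a.val * (-1) ^ b.val := by decide
  unfold chi
  rw [show fieldTr n (x + y) = fieldTr n x + fieldTr n y from map_add _ x y]
  exact h _ _

lemma chi_zero {n : ℕ} : chi n 0 = 1 := by
  unfold chi fieldTr; rw [map_zero]; rfl

lemma sum_chi {n : ℕ} : ∑ x : GaloisField 2 n, chi n x = 0 := by
  obtain ⟨t, ht⟩ := Algebra.trace_surjective (ZMod 2) (GaloisField 2 n) 1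
  have h1 : chi n t = -1 := by
    unfold chi fieldTr; rw [ht]; simp [ZMod.val_one]
  have key : ∑ x : GaloisField 2 n, chi n x = ∑ x : GaloisField 2 n, chi n (x + t) :=
    (Equiv.sum_comp (Equiv.addRight t) (chi n)).symm
  have h2 : ∑ x : GaloisField 2 n, chi n (x + t) = - ∑ x : GaloisField 2 n, chi n x := by
    simp_rw [chi_add, h1]
    simp [Finset.sum_mul]
  linarith [key, h2]

lemma orth {n : ℕ} (s : GaloisField 2 n) :
    ∑ a : GaloisField 2 n, chi n (a * s)
      = if s = 0 then (Fintype.card (GaloisField 2 n) : ℤ) else 0 := by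
  split_ifs with hs
  · subst hs; simp [chi_zero]
  · rw [← sum_chi (n := n)]
    exact Equiv.sum_comp (Equiv.mulRight₀ s hs) (chi n)

set_option maxHeartbeats 2000000 in
lemma cube_sum {n : ℕ} (G : GaloisField 2 n → GaloisField 2 n) :
    ∑ a : GaloisField 2 n, ∑ b : GaloisField 2 n, walsh n G a b ^ 3
      = (Fintype.card (GaloisField 2 n) : ℤ) ^ 2 *
        ((Finset.univ.filter
          (fun p : GaloisField 2 n × GaloisField 2 n =>
            G p.1 + G p.2 + G (p.1 + p.2) = 0)).card : ℤ) := by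
  classical
  set q : ℤ := (Fintype.card (GaloisField 2 n) : ℤ) with hq
  have hW3 : ∀ a b : GaloisField 2 n, walsh n G a b ^ 3
      = ∑ x : GaloisField 2 n, ∑ y : GaloisField 2 n, ∑ z : GaloisField 2 n,
          chi n (b * (G x + G y + G z) + a * (x + y + z)) := by
    intro a b
    have e1 : walsh n G a b ^ 3 = walsh n G a b * (walsh n G a b * walsh n G a b) := by ring
    rw [e1]
    unfold walsh
    rw [Finset.sum_mul_sum, Finset.sum_mul_sum]
    refine Finset.sum_congr rfl fun x _ => Finset.sum_congr rfl fun y _ => ?_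
    rw [Finset.mul_sum]
    refine Finset.sum_congr rfl fun z _ => ?_
    rw [← chi_add, ← chi_add]
    congr 1
    ring
  have hW3' : ∀ a b : GaloisField 2 n, walsh n G a b ^ 3
      = ∑ t : GaloisField 2 n × GaloisField 2 n × GaloisField 2 n,
          chi n (b * (G t.1 + G t.2.1 + G t.2.2) + a * (t.1 + t.2.1 + t.2.2)) := by
    intro a b
    rw [hW3 a b, Fintype.sum_prod_type]
    refine Finset.sum_congr rfl fun x _ => ?_
    rw [Fintype.sum_prod_type]
  calc ∑ a : GaloisField 2 n, ∑ b : GaloisField 2 n, walsh n G a b ^ 3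
      = ∑ ab : GaloisField 2 n × GaloisField 2 n,
          ∑ t : GaloisField 2 n × GaloisField 2 n × GaloisField 2 n,
          chi n (ab.2 * (G t.1 + G t.2.1 + G t.2.2) + ab.1 * (t.1 + t.2.1 + t.2.2)) := by
        rw [Fintype.sum_prod_type]
        exact Finset.sum_congr rfl fun a _ => Finset.sum_congr rfl fun b _ => hW3' a b
    _ = ∑ t : GaloisField 2 n × GaloisField 2 n × GaloisField 2 n,
          ∑ ab : GaloisField 2 n × GaloisField 2 n,
          chi n (ab.2 * (G t.1 + G t.2.1 + G t.2.2) + ab.1 * (t.1 + t.2.1 + t.2.2)) :=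
        Finset.sum_comm
    _ = ∑ t : GaloisField 2 n × GaloisField 2 n × GaloisField 2 n,
          (if t.1 + t.2.1 + t.2.2 = 0 then q else 0) *
          (if G t.1 + G t.2.1 + G t.2.2 = 0 then q else 0) := by
        refine Finset.sum_congr rfl fun t _ => ?_
        rw [show (if t.1 + t.2.1 + t.2.2 = 0 then q else 0) *
              (if G t.1 + G t.2.1 + G t.2.2 = 0 then q else 0)
            = (∑ a : GaloisField 2 n, chi n (a * (t.1 + t.2.1 + t.2.2))) *
              (∑ b : GaloisField 2 n, chi n (b * (G t.1 + G t.2.1 + G t.2.2))) by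
          rw [orth, orth]]
        rw [Finset.sum_mul_sum, Fintype.sum_prod_type]
        refine Finset.sum_congr rfl fun a _ => Finset.sum_congr rfl fun b _ => ?_
        rw [← chi_add]
        congr 1
        ring
    _ = ∑ x : GaloisField 2 n, ∑ y : GaloisField 2 n, ∑ z : GaloisField 2 n,
          (if x + y + z = 0 then q else 0) * (if G x + G y + G z = 0 then q else 0) := by
        rw [Fintype.sum_prod_type]
        exact Finset.sum_congr rfl fun x _ => Fintype.sum_prod_type _
    _ = ∑ x : GaloisField 2 n, ∑ y : GaloisField 2 n,
          q * (if G x + G y + G (x + y) = 0 then q else 0) := by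
        refine Finset.sum_congr rfl fun x _ => Finset.sum_congr rfl fun y _ => ?_
        have hcond : ∀ z : GaloisField 2 n, (x + y + z = 0) ↔ (z = x + y) := by
          intro z
          constructor
          · intro h
            have h2 : z = -(x + y) := by linear_combination h
            simpa [CharTwo.neg_eq] using h2
          · rintro rfl
            rw [CharTwo.add_self_eq_zero]
        calc ∑ z : GaloisField 2 n,
              (if x + y + z = 0 then q else 0) * (if G x + G y + G z = 0 then q else 0)
            = ∑ z : GaloisField 2 n,
              (if z = x + y then q * (if G x + G y + G z = 0 then q else 0) else 0) := by
              refine Finset.sum_congr rfl fun z _ => ?_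
              rw [if_congr (hcond z) rfl rfl]
              split_ifs <;> ring
          _ = q * (if G x + G y + G (x + y) = 0 then q else 0) := by
              rw [Finset.sum_ite_eq' Finset.univ (x + y)]
              simp
    _ = q ^ 2 * ((Finset.univ.filter
          (fun p : GaloisField 2 n × GaloisField 2 n =>
            G p.1 + G p.2 + G (p.1 + p.2) = 0)).card : ℤ) := by
        have e2 : ∀ x y : GaloisField 2 n,
            q * (if G x + G y + G (x + y) = 0 then q else 0)
            = q * q * (if G x + G y + G (x + y) = 0 then (1:ℤ) else 0) := by
          intro x y; split_ifs <;> ring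
        simp_rw [e2, ← Finset.mul_sum]
        have h2 : ∑ x : GaloisField 2 n, ∑ y : GaloisField 2 n,
            (if G x + G y + G (x + y) = 0 then (1:ℤ) else 0)
            = ∑ p : GaloisField 2 n × GaloisField 2 n,
              (if G p.1 + G p.2 + G (p.1 + p.2) = 0 then (1:ℤ) else 0) := by
          rw [Fintype.sum_prod_type]
        rw [h2, Finset.sum_boole]
        ring

lemma apn_triv {n : ℕ} {F : GaloisField 2 n → GaloisField 2 n}
    (hF : IsAPN n F) (h0 : F 0 = 0) (x y : GaloisField 2 n)
    (h : F x + F y + F (x + y) = 0) : x = 0 ∨ y = 0 ∨ x = y := by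
  classical
  have two0 : (2 : GaloisField 2 n) = 0 := CharTwo.two_eq_zero
  by_contra hc
  push_neg at hc
  obtain ⟨hx, hy, hxy⟩ := hc
  have ha : x + y ≠ 0 := by
    intro h'
    exact hxy (by linear_combination h' - y * two0)
  have hcard := hF (x + y) (F x + F y) ha
  have hsub : Nat.card {u : GaloisField 2 n // F (u + (x + y)) + F u = F x + F y}
      = (Finset.univ.filter (fun u : GaloisField 2 n =>
          F (u + (x + y)) + F u = F x + F y)).card := by
    rw [Nat.card_eq_fintype_card, Fintype.card_subtype]
  have hxy' : F (x + y) = F x + F y := by linear_combination h - (F x + F y) * two0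
  have hmem : ({0, x, x + y} : Finset (GaloisField 2 n)) ⊆
      Finset.univ.filter (fun u : GaloisField 2 n =>
          F (u + (x + y)) + F u = F x + F y) := by
    intro u hu
    simp only [Finset.mem_insert, Finset.mem_singleton] at hu
    rw [Finset.mem_filter]
    refine ⟨Finset.mem_univ _, ?_⟩
    rcases hu with h1 | h1 | h1 <;> rw [h1]
    · rw [zero_add, h0, add_zero, hxy']
    · have e : x + (x + y) = y := by linear_combination x * two0
      rw [e]; ring
    · have e : (x + y) + (x + y) = 0 := CharTwo.add_self_eq_zero _
      rw [e, h0, zero_add, hxy']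
  have hc3 : ({0, x, x + y} : Finset (GaloisField 2 n)).card = 3 := by
    rw [Finset.card_insert_of_notMem, Finset.card_insert_of_notMem, Finset.card_singleton]
    · simp only [Finset.mem_singleton]
      intro h'
      exact hy (by linear_combination -h')
    · simp only [Finset.mem_insert, Finset.mem_singleton]
      push_neg
      exact ⟨fun h' => hx h'.symm, fun h' => ha h'.symm⟩
  have := Finset.card_le_card hmem
  rw [hc3] at this
  omega

section Count
variable {n : ℕ} {F : GaloisField 2 n → GaloisField 2 n} {x₀ ε : GaloisField 2 n}

local notation "K" => GaloisField 2 n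

/-- the predicate defining `S_{x₀, F x₀ + ε}` -/
def Pred (F : GaloisField 2 n → GaloisField 2 n) (x₀ ε u : GaloisField 2 n) : Prop :=
  F u + F (u + x₀) + (F x₀ + ε) = 0

lemma pred_not_zero (h0 : F 0 = 0) (hε : ε ≠ 0) : ¬ Pred F x₀ ε 0 := by
  intro h
  unfold Pred at h
  rw [h0, zero_add, zero_add] at h
  have two0 : (2 : K) = 0 := CharTwo.two_eq_zero
  exact hε (by linear_combination h - F x₀ * two0)

lemma pred_not_x₀ (h0 : F 0 = 0) (hε : ε ≠ 0) : ¬ Pred F x₀ ε x₀ := by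
  intro h
  unfold Pred at h
  rw [CharTwo.add_self_eq_zero, h0] at h
  have two0 : (2 : K) = 0 := CharTwo.two_eq_zero
  exact hε (by linear_combination h - F x₀ * two0)

lemma key_iff (hF : IsAPN n F) (h0 : F 0 = 0) (hx₀ : x₀ ≠ 0) (hε : ε ≠ 0)
    (x y : K) :
    (pointModify n F x₀ ε x + pointModify n F x₀ ε y + pointModify n F x₀ ε (x + y) = 0)
    ↔ (x = 0 ∨ (x ≠ 0 ∧ y = 0) ∨ (x ≠ 0 ∧ y = x) ∨
       (x = x₀ ∧ Pred F x₀ ε y) ∨ (Pred F x₀ ε x ∧ y = x₀) ∨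
       (Pred F x₀ ε x ∧ y = x + x₀)) := by
  have two0 : (2 : K) = 0 := CharTwo.two_eq_zero
  set G := pointModify n F x₀ ε with hG
  have hGx : ∀ u : K, u ≠ x₀ → G u = F u := fun u hu => if_neg hu
  have hGx₀ : G x₀ = F x₀ + ε := if_pos rfl
  have hP0 := pred_not_zero (x₀ := x₀) h0 hε
  have hPx₀ := pred_not_x₀ (x₀ := x₀) h0 hε
  constructor
  · intro h
    by_cases h1 : x = x₀ <;> by_cases h2 : y = x₀ <;> by_cases h3 : x + y = x₀
    · exact absurd (by linear_combination h3 - h1 - h2) hx₀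
    · exact Or.inr (Or.inr (Or.inl ⟨fun h' => hx₀ (h1.symm.trans h'), h2.trans h1.symm⟩))
    · exact Or.inr (Or.inl ⟨fun h' => hx₀ (h1.symm.trans h'),
        by linear_combination h3 - h1⟩)
    · refine Or.inr (Or.inr (Or.inr (Or.inl ⟨h1, ?_⟩)))
      rw [h1] at h h3
      rw [hGx₀, hGx y h2, hGx _ h3] at h
      unfold Pred
      rw [add_comm y x₀]
      linear_combination h
    · exact Or.inl (by linear_combination h3 - h2)
    · refine Or.inr (Or.inr (Or.inr (Or.inr (Or.inl ⟨?_, h2⟩))))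
      rw [h2] at h h3
      rw [hGx x h1, hGx₀, hGx _ h3] at h
      unfold Pred
      linear_combination h
    · refine Or.inr (Or.inr (Or.inr (Or.inr (Or.inr ⟨?_, ?_⟩))))
      · rw [hGx x h1, hGx y h2, h3, hGx₀] at h
        unfold Pred
        have e : y = x + x₀ := by linear_combination h3 - x * two0
        rw [← e]
        linear_combination h
      · linear_combination h3 - x * two0
    · rw [hGx x h1, hGx y h2, hGx _ h3] at h
      rcases apn_triv hF h0 x y h with h' | h' | h'
      · exact Or.inl h'
      · by_cases hx : x = 0
        · exact Or.inl hx
        · exact Or.inr (Or.inl ⟨hx, h'⟩)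
      · by_cases hx : x = 0
        · exact Or.inl hx
        · exact Or.inr (Or.inr (Or.inl ⟨hx, h'.symm⟩))
  · intro h
    have hG0 : G 0 = 0 := by rw [hGx 0 (Ne.symm hx₀), h0]
    rcases h with hx1 | ⟨hx, hy1⟩ | ⟨hx, hy1⟩ | ⟨hx1, hy⟩ | ⟨hx, hy1⟩ | ⟨hx, hy1⟩
    · rw [hx1, zero_add, hG0]
      linear_combination (G y) * two0
    · rw [hy1, add_zero, hG0]
      linear_combination (G x) * two0
    · rw [hy1, CharTwo.add_self_eq_zero x, hG0]
      linear_combination (G x) * two0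
    · have hy0 : y ≠ 0 := fun h' => hP0 (h' ▸ hy)
      have hyx₀ : y ≠ x₀ := fun h' => hPx₀ (h' ▸ hy)
      have h3 : x₀ + y ≠ x₀ := fun h' => hy0 (by linear_combination h')
      rw [hx1, hGx₀, hGx y hyx₀, hGx _ h3]
      unfold Pred at hy
      rw [add_comm y x₀] at hy
      linear_combination hy
    · have hx0 : x ≠ 0 := fun h' => hP0 (h' ▸ hx)
      have hxx₀ : x ≠ x₀ := fun h' => hPx₀ (h' ▸ hx)
      have h3 : x + x₀ ≠ x₀ := fun h' => hx0 (by linear_combination h')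
      rw [hy1, hGx x hxx₀, hGx₀, hGx _ h3]
      unfold Pred at hx
      linear_combination hx
    · have hx0 : x ≠ 0 := fun h' => hP0 (h' ▸ hx)
      have hxx₀ : x ≠ x₀ := fun h' => hPx₀ (h' ▸ hx)
      have h3 : x + x₀ ≠ x₀ := fun h' => hx0 (by linear_combination h')
      have e : x + (x + x₀) = x₀ := by linear_combination x * two0
      rw [hy1, hGx x hxx₀, hGx _ h3, e, hGx₀]
      exact hx

set_option maxHeartbeats 2000000 in
lemma count_card (hF : IsAPN n F) (h0 : F 0 = 0) (hx₀ : x₀ ≠ 0) (hε : ε ≠ 0) :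
    (Finset.univ.filter (fun p : K × K =>
      pointModify n F x₀ ε p.1 + pointModify n F x₀ ε p.2 +
        pointModify n F x₀ ε (p.1 + p.2) = 0)).card
    = Fintype.card K + (Fintype.card K - 1) + (Fintype.card K - 1) +
        3 * (Finset.univ.filter (Pred F x₀ ε)).card := by
  classical
  have hP0 := pred_not_zero (x₀ := x₀) h0 hε
  have hPx₀ := pred_not_x₀ (x₀ := x₀) h0 hε
  set Sf : Finset K := Finset.univ.filter (Pred F x₀ ε) with hSf
  set A0 : Finset (K × K) := Finset.univ.image (fun y : K => ((0 : K), y)) with hA0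
  set A1 : Finset (K × K) :=
    (Finset.univ.erase (0 : K)).image (fun x : K => (x, (0 : K))) with hA1
  set A2 : Finset (K × K) := (Finset.univ.erase (0 : K)).image (fun x : K => (x, x)) with hA2
  set B1 : Finset (K × K) := Sf.image (fun u : K => (x₀, u)) with hB1
  set B2 : Finset (K × K) := Sf.image (fun u : K => (u, x₀)) with hB2
  set B3 : Finset (K × K) := Sf.image (fun u : K => (u, u + x₀)) with hB3
  have mA0 : ∀ p : K × K, p ∈ A0 ↔ p.1 = 0 := by
    rintro ⟨x, y⟩
    simp [hA0, Prod.ext_iff, eq_comm]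
  have mA1 : ∀ p : K × K, p ∈ A1 ↔ p.1 ≠ 0 ∧ p.2 = 0 := by
    rintro ⟨x, y⟩
    simp only [hA1, Finset.mem_image, Finset.mem_erase, Finset.mem_univ, and_true,
      Prod.mk.injEq]
    constructor
    · rintro ⟨a, ha, rfl, rfl⟩; exact ⟨ha, rfl⟩
    · rintro ⟨hx, rfl⟩; exact ⟨x, hx, rfl, rfl⟩
  have mA2 : ∀ p : K × K, p ∈ A2 ↔ p.1 ≠ 0 ∧ p.2 = p.1 := by
    rintro ⟨x, y⟩
    simp only [hA2, Finset.mem_image, Finset.mem_erase, Finset.mem_univ, and_true,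
      Prod.mk.injEq]
    constructor
    · rintro ⟨a, ha, rfl, rfl⟩; exact ⟨ha, rfl⟩
    · rintro ⟨hx, rfl⟩; exact ⟨y, hx, rfl, rfl⟩
  have mB1 : ∀ p : K × K, p ∈ B1 ↔ p.1 = x₀ ∧ Pred F x₀ ε p.2 := by
    rintro ⟨x, y⟩
    simp only [hB1, Finset.mem_image, hSf, Finset.mem_filter, Finset.mem_univ, true_and,
      Prod.mk.injEq]
    constructor
    · rintro ⟨a, ha, rfl, rfl⟩; exact ⟨rfl, ha⟩
    · rintro ⟨rfl, hy⟩; exact ⟨y, hy, rfl, rfl⟩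
  have mB2 : ∀ p : K × K, p ∈ B2 ↔ Pred F x₀ ε p.1 ∧ p.2 = x₀ := by
    rintro ⟨x, y⟩
    simp only [hB2, Finset.mem_image, hSf, Finset.mem_filter, Finset.mem_univ, true_and,
      Prod.mk.injEq]
    constructor
    · rintro ⟨a, ha, rfl, rfl⟩; exact ⟨ha, rfl⟩
    · rintro ⟨hx, rfl⟩; exact ⟨x, hx, rfl, rfl⟩
  have mB3 : ∀ p : K × K, p ∈ B3 ↔ Pred F x₀ ε p.1 ∧ p.2 = p.1 + x₀ := by
    rintro ⟨x, y⟩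
    simp only [hB3, Finset.mem_image, hSf, Finset.mem_filter, Finset.mem_univ, true_and,
      Prod.mk.injEq]
    constructor
    · rintro ⟨a, ha, rfl, rfl⟩; exact ⟨ha, rfl⟩
    · rintro ⟨hx, rfl⟩; exact ⟨x, hx, rfl, rfl⟩
  have hset : (Finset.univ.filter (fun p : K × K =>
      pointModify n F x₀ ε p.1 + pointModify n F x₀ ε p.2 +
        pointModify n F x₀ ε (p.1 + p.2) = 0))
      = A0 ∪ A1 ∪ A2 ∪ B1 ∪ B2 ∪ B3 := by
    ext p
    rw [Finset.mem_filter]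
    simp only [Finset.mem_union, Finset.mem_univ, true_and]
    rw [mA0, mA1, mA2, mB1, mB2, mB3]
    rw [key_iff hF h0 hx₀ hε p.1 p.2]
    tauto
  rw [hset]
  -- disjointness
  have d01 : Disjoint A0 A1 := by
    rw [Finset.disjoint_left]
    intro p h h'
    exact ((mA1 p).mp h').1 ((mA0 p).mp h)
  have d02 : Disjoint A0 A2 := by
    rw [Finset.disjoint_left]
    intro p h h'
    exact ((mA2 p).mp h').1 ((mA0 p).mp h)
  have d0B1 : Disjoint A0 B1 := by
    rw [Finset.disjoint_left]
    intro p h h'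
    exact hx₀ (((mB1 p).mp h').1 ▸ (mA0 p).mp h)
  have d0B2 : Disjoint A0 B2 := by
    rw [Finset.disjoint_left]
    intro p h h'
    exact hP0 ((mA0 p).mp h ▸ ((mB2 p).mp h').1)
  have d0B3 : Disjoint A0 B3 := by
    rw [Finset.disjoint_left]
    intro p h h'
    exact hP0 ((mA0 p).mp h ▸ ((mB3 p).mp h').1)
  have d12 : Disjoint A1 A2 := by
    rw [Finset.disjoint_left]
    intro p h h'
    obtain ⟨h1, h2⟩ := (mA1 p).mp h
    obtain ⟨h1', h2'⟩ := (mA2 p).mp h'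
    exact h1' (h2' ▸ h2)
  have d1B1 : Disjoint A1 B1 := by
    rw [Finset.disjoint_left]
    intro p h h'
    exact hP0 (((mA1 p).mp h).2 ▸ ((mB1 p).mp h').2)
  have d1B2 : Disjoint A1 B2 := by
    rw [Finset.disjoint_left]
    intro p h h'
    exact hx₀ (((mB2 p).mp h').2 ▸ ((mA1 p).mp h).2)
  have d1B3 : Disjoint A1 B3 := by
    rw [Finset.disjoint_left]
    intro p h h'
    obtain ⟨h1, h2⟩ := (mA1 p).mp h
    obtain ⟨h1', h2'⟩ := (mB3 p).mp h'
    apply hPx₀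
    have e : p.1 = x₀ := by
      have two0 : (2 : K) = 0 := CharTwo.two_eq_zero
      have := h2' ▸ h2
      linear_combination this - x₀ * two0
    exact e ▸ h1'
  have d2B1 : Disjoint A2 B1 := by
    rw [Finset.disjoint_left]
    intro p h h'
    obtain ⟨h1, h2⟩ := (mA2 p).mp h
    obtain ⟨h1', h2'⟩ := (mB1 p).mp h'
    exact hPx₀ ((h2.trans h1') ▸ h2')
  have d2B2 : Disjoint A2 B2 := by
    rw [Finset.disjoint_left]
    intro p h h'
    obtain ⟨h1, h2⟩ := (mA2 p).mp h
    obtain ⟨h1', h2'⟩ := (mB2 p).mp h'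
    exact hPx₀ ((h2.symm.trans h2') ▸ h1')
  have d2B3 : Disjoint A2 B3 := by
    rw [Finset.disjoint_left]
    intro p h h'
    obtain ⟨h1, h2⟩ := (mA2 p).mp h
    obtain ⟨h1', h2'⟩ := (mB3 p).mp h'
    have : p.1 = p.1 + x₀ := h2.symm.trans h2'
    exact hx₀ (by linear_combination - this)
  have dB12 : Disjoint B1 B2 := by
    rw [Finset.disjoint_left]
    intro p h h'
    exact hPx₀ (((mB1 p).mp h).1 ▸ ((mB2 p).mp h').1)
  have dB13 : Disjoint B1 B3 := by
    rw [Finset.disjoint_left]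
    intro p h h'
    exact hPx₀ (((mB1 p).mp h).1 ▸ ((mB3 p).mp h').1)
  have dB23 : Disjoint B2 B3 := by
    rw [Finset.disjoint_left]
    intro p h h'
    obtain ⟨h1, h2⟩ := (mB2 p).mp h
    obtain ⟨h1', h2'⟩ := (mB3 p).mp h'
    have : x₀ = p.1 + x₀ := h2.symm.trans h2'
    apply hP0
    have e : p.1 = 0 := by linear_combination -this
    exact e ▸ h1'
  -- cardinalities
  have cA0 : A0.card = Fintype.card K := by
    rw [hA0, Finset.card_image_of_injective _ (fun a b h => (Prod.ext_iff.mp h).2),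
      Finset.card_univ]
  have cA1 : A1.card = Fintype.card K - 1 := by
    rw [hA1, Finset.card_image_of_injective _ (fun a b h => (Prod.ext_iff.mp h).1),
      Finset.card_erase_of_mem (Finset.mem_univ _), Finset.card_univ]
  have cA2 : A2.card = Fintype.card K - 1 := by
    rw [hA2, Finset.card_image_of_injective _ (fun a b h => (Prod.ext_iff.mp h).1),
      Finset.card_erase_of_mem (Finset.mem_univ _), Finset.card_univ]
  have cB1 : B1.card = Sf.card :=
    Finset.card_image_of_injective _ (fun a b h => (Prod.ext_iff.mp h).2)
  have cB2 : B2.card = Sf.card :=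
    Finset.card_image_of_injective _ (fun a b h => (Prod.ext_iff.mp h).1)
  have cB3 : B3.card = Sf.card :=
    Finset.card_image_of_injective _ (fun a b h => (Prod.ext_iff.mp h).1)
  rw [Finset.card_union_of_disjoint, Finset.card_union_of_disjoint,
    Finset.card_union_of_disjoint, Finset.card_union_of_disjoint,
    Finset.card_union_of_disjoint]
  · rw [cA0, cA1, cA2, cB1, cB2, cB3]; ring
  · exact d01
  · simp only [Finset.disjoint_union_left]
    exact ⟨d02, d12⟩
  · simp only [Finset.disjoint_union_left]
    exact ⟨⟨d0B1, d1B1⟩, d2B1⟩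
  · simp only [Finset.disjoint_union_left]
    exact ⟨⟨⟨d0B2, d1B2⟩, d2B2⟩, dB12⟩
  · simp only [Finset.disjoint_union_left]
    exact ⟨⟨⟨⟨d0B3, d1B3⟩, d2B3⟩, dB13⟩, dB23⟩

end Count

theorem third_moment_of_modified_apn (n : ℕ) (hn : 0 < n) (F : GaloisField 2 n → GaloisField 2 n)
    (hF : IsAPN n F) (h0 : F 0 = 0) (x₀ : GaloisField 2 n) (hx₀ : x₀ ≠ 0)
    (ε : GaloisField 2 n) (hε : ε ≠ 0) :
    ∑ a : GaloisField 2 n, ∑ b : GaloisField 2 n, walsh n (pointModify n F x₀ ε) a b ^ 3 =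
      2 ^ (2 * n + 1) * (3 * 2 ^ (n - 1) - 1) +
        3 * 2 ^ (2 * n) *
          (Nat.card {u : GaloisField 2 n // F u + F (u + x₀) + (F x₀ + ε) = 0} : ℤ) := by
  classical
  have hcard : Fintype.card (GaloisField 2 n) = 2 ^ n := by
    have h := GaloisField.card 2 n hn.ne'
    rwa [Nat.card_eq_fintype_card] at h
  rw [cube_sum (pointModify n F x₀ ε),
    count_card (n := n) (F := F) (x₀ := x₀) (ε := ε) hF h0 hx₀ hε]
  have hs : (Nat.card {u : GaloisField 2 n // F u + F (u + x₀) + (F x₀ + ε) = 0} : ℤ)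
      = ((Finset.univ.filter (Pred F x₀ ε)).card : ℤ) := by
    rw [Nat.card_eq_fintype_card, Fintype.card_subtype]
    norm_cast
  rw [hs]
  have hq1 : 1 ≤ Fintype.card (GaloisField 2 n) := Fintype.card_pos
  have hcast : ((Fintype.card (GaloisField 2 n) + (Fintype.card (GaloisField 2 n) - 1) +
        (Fintype.card (GaloisField 2 n) - 1) +
        3 * (Finset.univ.filter (Pred F x₀ ε)).card : ℕ) : ℤ)
      = 3 * (Fintype.card (GaloisField 2 n) : ℤ) - 2 +
        3 * ((Finset.univ.filter (Pred F x₀ ε)).card : ℤ) := by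
    push_cast [Nat.cast_sub hq1]
    ring
  rw [hcast, hcard]
  obtain ⟨m, rfl⟩ : ∃ m, n = m + 1 := ⟨n - 1, (Nat.succ_pred_eq_of_pos hn).symm⟩
  simp only [Nat.add_sub_cancel]
  push_cast
  ring
end

section
/- Let m be a positive integer and let F : F_{2^n} → F_{2^n} be the power function F(x) = x^m. If F is x_0-APN for some x_0 ∈ F_{2^n} with x_0 ≠ 0, then F is x_1-APN for every x_1 ∈ F_{2^n} with x_1 ≠ 0. -/
/-! Power functions are homogeneous: `(c y)^m = c^m y^m`, so the substitution `y ↦ c y` carries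
the partial-APN equation at `x` to the one at `c x` and scales the degeneracy product
`(x + u)(x + v)(u + v)` by `c^3`; any nonzero point is `c x₁` for a suitable `c ≠ 0`. -/

open scoped Classical

theorem IsPAPN.pow_of_mul {n m : ℕ} {c x : GaloisField 2 n} (hc : c ≠ 0)
    (h : IsPAPN n (fun y => y ^ m) (c * x)) : IsPAPN n (fun y => y ^ m) x := by
  intro u v huv
  have hscaled : (c * x) ^ m + (c * u) ^ m + (c * v) ^ m + (c * x + c * u + c * v) ^ m = 0 := by
    calc (c * x) ^ m + (c * u) ^ m + (c * v) ^ m + (c * x + c * u + c * v) ^ m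
        = c ^ m * (x ^ m + u ^ m + v ^ m + (x + u + v) ^ m) := by
          rw [← mul_add, ← mul_add, mul_pow, mul_pow, mul_pow, mul_pow]; ring
      _ = 0 := by rw [huv, mul_zero]
  have hdegenerate := h (c * u) (c * v) hscaled
  have hfactor : (c * x + c * u) * (c * x + c * v) * (c * u + c * v)
      = c ^ 3 * ((x + u) * (x + v) * (u + v)) := by ring
  rw [hfactor] at hdegenerate
  exact (mul_eq_zero.mp hdegenerate).resolve_left (pow_ne_zero 3 hc)

theorem power_papn_nonzero_point_general (n m : ℕ)
    (x₀ : GaloisField 2 n) (hx₀ : x₀ ≠ 0)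
    (h : IsPAPN n (fun x => x ^ m) x₀) :
    ∀ x₁ : GaloisField 2 n, x₁ ≠ 0 → IsPAPN n (fun x => x ^ m) x₁ := by
  intro x₁ hx₁
  refine IsPAPN.pow_of_mul (c := x₀ * x₁⁻¹) (mul_ne_zero hx₀ (inv_ne_zero hx₁)) ?_
  rwa [inv_mul_cancel_right₀ hx₁]

theorem power_papn_nonzero_point (n m : ℕ) (hm : 0 < m)
    (x₀ : GaloisField 2 n) (hx₀ : x₀ ≠ 0)
    (h : IsPAPN n (fun x => x ^ m) x₀) :
    ∀ x₁ : GaloisField 2 n, x₁ ≠ 0 → IsPAPN n (fun x => x ^ m) x₁ :=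
  power_papn_nonzero_point_general n m x₀ hx₀ h
end

section
/- Let m be a positive integer and let F : F_{2^n} → F_{2^n} be the power function F(x) = x^m. Then F is APN if and only if F is 0-APN and F is x_1-APN for some x_1 ∈ F_{2^n} with x_1 ≠ 0. -/
open scoped Classical

lemma char2_zero (n : ℕ) : (2 : GaloisField 2 n) = 0 := by
  haveI : Fact (Nat.Prime 2) := ⟨Nat.prime_two⟩
  exact_mod_cast CharP.cast_eq_zero (GaloisField 2 n) 2

lemma apn_iff_papn_all (n : ℕ) (F : GaloisField 2 n → GaloisField 2 n) :
    IsAPN n F ↔ ∀ x₀, IsPAPN n F x₀ := by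
  have h2 : (2 : GaloisField 2 n) = 0 := char2_zero n
  constructor
  · intro hAPN x₀ u v hsum
    by_contra hprod
    have hxu : x₀ + u ≠ 0 := fun h => hprod (by rw [h]; ring)
    have hxv : x₀ + v ≠ 0 := fun h => hprod (by rw [h]; ring)
    have huv : u + v ≠ 0 := fun h => hprod (by rw [h]; ring)
    let a := x₀ + u
    let b := F x₀ + F u
    let s : Set (GaloisField 2 n) := {x | F (x + a) + F x = b}
    have hx₀s : x₀ ∈ s := by
      have e : x₀ + (x₀ + u) = u := by linear_combination x₀ * h2
      show F (x₀ + (x₀ + u)) + F x₀ = F x₀ + F u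
      rw [e]; ring
    have hus : u ∈ s := by
      have e : u + (x₀ + u) = x₀ := by linear_combination u * h2
      show F (u + (x₀ + u)) + F u = F x₀ + F u
      rw [e]
    have hvs : v ∈ s := by
      have e : v + (x₀ + u) = x₀ + u + v := by ring
      show F (v + (x₀ + u)) + F v = F x₀ + F u
      rw [e]
      linear_combination hsum - (F x₀ + F u) * h2
    have hx0u : x₀ ≠ u := fun h => hxu (by rw [h]; linear_combination u * h2)
    have hx0v : x₀ ≠ v := fun h => hxv (by rw [h]; linear_combination v * h2)
    have huv' : u ≠ v := fun h => huv (by rw [h]; linear_combination v * h2)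
    have hsub : ({x₀, u, v} : Set (GaloisField 2 n)) ⊆ s := by
      intro y hy
      rcases hy with rfl | rfl | rfl
      · exact hx₀s
      · exact hus
      · exact hvs
    have h3 : ({x₀, u, v} : Set (GaloisField 2 n)).ncard = 3 :=
      Set.ncard_eq_three.mpr ⟨x₀, u, v, hx0u, hx0v, huv', rfl⟩
    have hle : ({x₀, u, v} : Set (GaloisField 2 n)).ncard ≤ s.ncard :=
      Set.ncard_le_ncard hsub (Set.toFinite s)
    have hcard : Nat.card {x : GaloisField 2 n // F (x + a) + F x = b} = s.ncard :=
      Nat.card_coe_set_eq s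
    have := hAPN a b hxu
    omega
  · intro hP a b ha
    set s : Set (GaloisField 2 n) := {x | F (x + a) + F x = b} with hs
    have hcard : Nat.card {x : GaloisField 2 n // F (x + a) + F x = b} = s.ncard :=
      Nat.card_coe_set_eq s
    rcases Set.eq_empty_or_nonempty s with he | ⟨x₀, hx₀⟩
    · rw [hcard, he]; simp
    · have hsub : s ⊆ {x₀, x₀ + a} := by
        intro y hy
        have hx₀' : F (x₀ + a) + F x₀ = b := hx₀
        have hy' : F (y + a) + F y = b := hy
        have key : F x₀ + F (x₀ + a) + F y + F (x₀ + (x₀ + a) + y) = 0 := by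
          have e : x₀ + (x₀ + a) + y = y + a := by linear_combination x₀ * h2
          rw [e]
          linear_combination hx₀' + hy' + b * h2
        have hp := hP x₀ (x₀ + a) y key
        have hfac : a * ((x₀ + y) * ((x₀ + a) + y)) = 0 := by
          linear_combination hp - ((x₀ + y) * (x₀ + a + y)) * x₀ * h2
        have := (mul_eq_zero.mp hfac).resolve_left ha
        simp only [Set.mem_insert_iff, Set.mem_singleton_iff]
        rcases mul_eq_zero.mp this with h | h
        · left; linear_combination h - x₀ * h2
        · right; linear_combination h - (x₀ + a) * h2
      calc Nat.card {x : GaloisField 2 n // F (x + a) + F x = b} = s.ncard := hcard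
        _ ≤ ({x₀, x₀ + a} : Set (GaloisField 2 n)).ncard :=
            Set.ncard_le_ncard hsub (Set.toFinite _)
        _ ≤ ({x₀ + a} : Set (GaloisField 2 n)).ncard + 1 := Set.ncard_insert_le _ _
        _ ≤ 2 := by rw [Set.ncard_singleton]

lemma papn_scale (n m : ℕ) {x₁ c : GaloisField 2 n} (hx₁ : x₁ ≠ 0) (hc : c ≠ 0)
    (h : IsPAPN n (fun x : GaloisField 2 n => x ^ m) x₁) :
    IsPAPN n (fun x : GaloisField 2 n => x ^ m) c := by
  intro u v hsum
  simp only at hsum ⊢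
  set l := x₁ / c with hl
  have hlne : l ≠ 0 := div_ne_zero hx₁ hc
  have hlc : l * c = x₁ := div_mul_cancel₀ x₁ hc
  have key : x₁ ^ m + (l * u) ^ m + (l * v) ^ m + (x₁ + l * u + l * v) ^ m = 0 := by
    rw [← hlc]
    have e : l * c + l * u + l * v = l * (c + u + v) := by ring
    rw [e, mul_pow, mul_pow, mul_pow, mul_pow]
    linear_combination (l ^ m) * hsum
  have hp := h (l * u) (l * v) key
  rw [← hlc] at hp
  have hfac : l ^ 3 * ((c + u) * (c + v) * (u + v)) = 0 := by linear_combination hp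
  exact (mul_eq_zero.mp hfac).resolve_left (pow_ne_zero 3 hlne)

theorem power_apn_iff_papn_on_line (n m : ℕ) (hm : 0 < m) :
    IsAPN n (fun x : GaloisField 2 n => x ^ m) ↔
      (IsPAPN n (fun x : GaloisField 2 n => x ^ m) 0 ∧
        ∃ x₁ : GaloisField 2 n, x₁ ≠ 0 ∧ IsPAPN n (fun x : GaloisField 2 n => x ^ m) x₁) := by
  rw [apn_iff_papn_all]
  constructor
  · intro h
    exact ⟨h 0, 1, one_ne_zero, h 1⟩
  · rintro ⟨h0, x₁, hx₁, h1⟩ x₀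
    by_cases hx₀ : x₀ = 0
    · rw [hx₀]; exact h0
    · exact papn_scale n m hx₁ hx₀ h1
end

section
/- Let n and d be positive integers and let F : F_{2^n} → F_{2^n} be defined by F(x) = x^{2^d − 1}. Then F is 0-APN if and only if gcd(d − 1, n) = 1. -/
/-!
Write `d = k + 1` and `e = 2^d - 1`. In characteristic 2, multiplying `u^e + v^e + (u+v)^e` by
`u v (u+v)` gives `u^(2^d) v^2 + u^2 v^(2^d)`, so for `u, v, u + v ≠ 0` the sum vanishes exactly
when `w = v/u` satisfies `w^(2^d) = w^2`, i.e. `w^(2^k) = w`: `w` is a periodic point of squaring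
with period `k`. Every element of `F_{2^n}` has period `n`, hence period `gcd(k, n)`; when this gcd
is `1` the only such `w` are `0` and `1`. Conversely, when `gcd(k, n) = g ≥ 2`, any `w ∉ {0, 1}`
of the subfield `F_{2^g}` has period `k` and yields the nontrivial zero `(1, w)`.
-/

open scoped Classical

open Function

theorem isPeriodicPt_sq_iff {M : Type*} [Monoid M] (k : ℕ) (x : M) :
    IsPeriodicPt (· ^ 2) k x ↔ x ^ 2 ^ k = x := by
  rw [IsPeriodicPt, IsFixedPt, pow_iterate]

theorem exists_ne_zero_ne_one_pow_eq_one {K : Type*} [Field K] [Fintype K] {m : ℕ}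
    (hm : m ∣ Fintype.card K - 1) (hm1 : m ≠ 1) : ∃ w : K, w ≠ 0 ∧ w ≠ 1 ∧ w ^ m = 1 := by
  obtain ⟨p, hp, hpm⟩ := Nat.exists_prime_and_dvd hm1
  have : Fact p.Prime := ⟨hp⟩
  obtain ⟨w, hw⟩ := exists_prime_orderOf_dvd_card (G := Kˣ) p
    (by rw [Fintype.card_units]; exact hpm.trans hm)
  refine ⟨w, w.ne_zero, fun h => hp.ne_one ?_, ?_⟩
  · rw [← hw, orderOf_eq_one_iff]
    exact Units.ext h
  · rw [← Units.val_pow_eq_pow_val, orderOf_dvd_iff_pow_eq_one.mp (hw ▸ hpm), Units.val_one]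

section CharTwo

variable {K : Type*} [Field K] [CharP K 2]

theorem mul_pow_add_pow_add_add_pow_two_pow_sub_one (k : ℕ) (u v : K) :
    u * v * (u + v) * (u ^ (2 ^ k - 1) + v ^ (2 ^ k - 1) + (u + v) ^ (2 ^ k - 1)) =
      u ^ 2 ^ k * v ^ 2 + u ^ 2 * v ^ 2 ^ k := by
  have h2 : (2 : K) = 0 := CharTwo.two_eq_zero
  set e := 2 ^ k - 1
  have hk : 2 ^ k = e + 1 := (Nat.succ_pred_eq_of_pos (Nat.two_pow_pos k)).symm
  have hfrob : (u + v) ^ 2 ^ k = u ^ 2 ^ k + v ^ 2 ^ k := add_pow_char_pow u v 2 k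
  rw [hk] at hfrob ⊢
  linear_combination u * v * hfrob + (u ^ (e + 2) * v + u * v ^ (e + 2)) * h2

theorem pow_add_pow_add_add_pow_eq_zero_iff_isPeriodicPt (k : ℕ) {u v : K} (hu : u ≠ 0) (hv : v ≠ 0)
    (huv : u + v ≠ 0) :
    u ^ (2 ^ (k + 1) - 1) + v ^ (2 ^ (k + 1) - 1) + (u + v) ^ (2 ^ (k + 1) - 1) = 0 ↔
      IsPeriodicPt (· ^ 2) k (v / u) := by
  have hprod : u * v * (u + v) ≠ 0 := mul_ne_zero (mul_ne_zero hu hv) huv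
  rw [isPeriodicPt_sq_iff, ← (mul_right_injective₀ hprod).eq_iff, mul_zero,
    mul_pow_add_pow_add_add_pow_two_pow_sub_one, CharTwo.add_eq_zero, ← CharTwo.sq_inj (x := (v / u) ^ 2 ^ k),
    ← pow_mul, ← pow_succ, div_pow, div_pow, div_eq_div_iff (pow_ne_zero _ hu) (pow_ne_zero _ hu)]
  constructor <;> intro h <;> linear_combination -h

end CharTwo

theorem papn_of_two_pow_sub_one (n d : ℕ) (hn : 0 < n) (hd : 0 < d) :
    IsPAPN n (fun x : GaloisField 2 n => x ^ (2 ^ d - 1)) 0 ↔ Nat.gcd (d - 1) n = 1 := by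
  obtain ⟨k, rfl⟩ := Nat.exists_eq_add_one_of_ne_zero hd.ne'
  have hcard : Fintype.card (GaloisField 2 n) = 2 ^ n := by
    rw [← Nat.card_eq_fintype_card, GaloisField.card 2 n hn.ne']
  have he : 2 ^ (k + 1) - 1 ≠ 0 := by
    have := Nat.one_lt_two_pow (Nat.succ_ne_zero k)
    omega
  simp only [IsPAPN, Nat.add_sub_cancel, zero_add, zero_pow he]
  constructor
  · intro hP
    by_contra hg
    have hg2 : 2 ≤ Nat.gcd k n := by
      have := Nat.gcd_pos_of_pos_right k hn
      omega
    obtain ⟨w, hw0, hw1, hw⟩ := exists_ne_zero_ne_one_pow_eq_one (K := GaloisField 2 n)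
      (hcard ▸ Nat.pow_sub_one_dvd_pow_sub_one 2 (Nat.gcd_dvd_right k n))
      (by have := Nat.pow_le_pow_right two_pos hg2; omega)
    have hper : IsPeriodicPt (· ^ 2) (Nat.gcd k n) w := by
      rw [isPeriodicPt_sq_iff, ← Nat.sub_add_cancel Nat.one_le_two_pow, pow_succ, hw, one_mul]
    have h1w : 1 + w ≠ 0 := by rwa [Ne, CharTwo.add_eq_zero, eq_comm]
    have hsum := (pow_add_pow_add_add_pow_eq_zero_iff_isPeriodicPt k one_ne_zero hw0 h1w).2
      (by rw [div_one]; exact hper.trans_dvd (Nat.gcd_dvd_left k n))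
    exact mul_ne_zero (mul_ne_zero one_ne_zero hw0) h1w (hP 1 w hsum)
  · intro hgcd u v h
    by_contra huv
    simp only [mul_eq_zero, not_or] at huv
    obtain ⟨⟨hu, hv⟩, huv⟩ := huv
    have hper := ((pow_add_pow_add_add_pow_eq_zero_iff_isPeriodicPt k hu hv huv).1 h).gcd
      ((isPeriodicPt_sq_iff n (v / u)).2 (hcard ▸ FiniteField.pow_card (v / u)))
    rw [hgcd, isPeriodicPt_sq_iff, pow_one, sq, mul_eq_left₀ (div_ne_zero hv hu),
      div_eq_one_iff_eq hu] at hper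
    exact huv (hper ▸ CharTwo.add_self_eq_zero u)
end

section
/- Let n and d be positive integers and let F : F_{2^n} → F_{2^n} be defined by F(x) = x^{2^d + 1} (a Gold exponent). Then F is 0-APN if and only if gcd(d, n) = 1. -/
open scoped Classical

/-!
In characteristic two, `F(u) + F(v) + F(u + v) = u v (u^(2^d-1) + v^(2^d-1))` for the Gold
function, so `F` is 0-APN exactly when `x ↦ x^(2^d-1)` is injective on the group `F_{2^n}ˣ`
of order `2^n - 1`, i.e. when `gcd(2^d - 1, 2^n - 1) = 2^gcd(d,n) - 1` equals `1`.
-/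

theorem forall_pow_eq_one_imp_eq_one_iff_coprime {G : Type*} [Group G] [Finite G] (m : ℕ) :
    (∀ g : G, g ^ m = 1 → g = 1) ↔ m.Coprime (Nat.card G) := by
  constructor
  · intro h
    by_contra hm
    have hp : Fact (m.gcd (Nat.card G)).minFac.Prime := ⟨Nat.minFac_prime hm⟩
    have hdvd := Nat.minFac_dvd (m.gcd (Nat.card G))
    obtain ⟨g, hg⟩ := exists_prime_orderOf_dvd_card' _ (hdvd.trans (Nat.gcd_dvd_right _ _))
    have hg1 : g = 1 :=
      h g (orderOf_dvd_iff_pow_eq_one.mp (hg ▸ hdvd.trans (Nat.gcd_dvd_left _ _)))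
    exact hp.out.one_lt.ne' (by rw [← hg, hg1, orderOf_one])
  · intro hm g hg
    exact orderOf_eq_one_iff.mp <| Nat.eq_one_of_dvd_coprimes hm
      (orderOf_dvd_of_pow_eq_one hg) (orderOf_dvd_natCard g)

theorem Nat.coprime_two_pow_sub_one_iff (a b : ℕ) :
    (2 ^ a - 1).Coprime (2 ^ b - 1) ↔ a.gcd b = 1 := by
  rw [Nat.Coprime, Nat.pow_sub_one_gcd_pow_sub_one]
  constructor
  · intro h
    exact Nat.pow_right_injective le_rfl (by omega : 2 ^ a.gcd b = 2 ^ 1)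
  · intro h
    rw [h]; rfl

theorem gold_sum_eq {R : Type*} [CommRing R] [CharP R 2] (d : ℕ) (u v : R) :
    u ^ (2 ^ d + 1) + v ^ (2 ^ d + 1) + (u + v) ^ (2 ^ d + 1)
      = u * v * (u ^ (2 ^ d - 1) + v ^ (2 ^ d - 1)) := by
  have h2 : (2 : R) = 0 := CharTwo.two_eq_zero
  obtain ⟨m, hm⟩ : ∃ m, 2 ^ d = m + 1 :=
    ⟨2 ^ d - 1, (Nat.sub_add_cancel Nat.one_le_two_pow).symm⟩
  rw [pow_succ (u + v), add_pow_char_pow, hm, Nat.add_sub_cancel]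
  linear_combination (u ^ (m + 1) * u + v ^ (m + 1) * v) * h2

theorem gold_zeroAPN_iff {K : Type*} [Field K] [CharP K 2] (d : ℕ) :
    (∀ u v : K, u ^ (2 ^ d + 1) + v ^ (2 ^ d + 1) + (u + v) ^ (2 ^ d + 1) = 0 →
        u * v * (u + v) = 0)
      ↔ ∀ t : Kˣ, t ^ (2 ^ d - 1) = 1 → t = 1 := by
  simp only [gold_sum_eq, mul_eq_zero, CharTwo.add_eq_zero]
  constructor
  · intro h t ht
    have ht' : (t : K) ^ (2 ^ d - 1) = 1 := by simpa using congrArg Units.val ht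
    rcases h t 1 (by simp [ht']) with (h0 | h0) | h1
    · exact absurd h0 t.ne_zero
    · exact absurd h0 one_ne_zero
    · exact Units.ext h1
  · intro h u v huv
    by_cases hu : u = 0
    · exact Or.inl (Or.inl hu)
    by_cases hv : v = 0
    · exact Or.inl (Or.inr hv)
    have hpow : u ^ (2 ^ d - 1) = v ^ (2 ^ d - 1) := huv.resolve_left (by simp [hu, hv])
    have hquot := h (Units.mk0 u hu / Units.mk0 v hv) (by
      rw [div_pow, div_eq_one]; exact Units.ext (by simpa using hpow))
    exact Or.inr ((div_eq_one_iff_eq hv).mp (by simpa using congrArg Units.val hquot))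

theorem papn_of_gold_general (n d : ℕ) (hn : 0 < n) :
    IsPAPN n (fun x : GaloisField 2 n => x ^ (2 ^ d + 1)) 0 ↔ Nat.gcd d n = 1 := by
  have hcard : Nat.card (GaloisField 2 n)ˣ = 2 ^ n - 1 := by
    rw [Nat.card_units, GaloisField.card 2 n hn.ne']
  have hF0 : (0 : GaloisField 2 n) ^ (2 ^ d + 1) = 0 := zero_pow (Nat.succ_ne_zero _)
  simp only [IsPAPN, hF0, zero_add]
  rw [gold_zeroAPN_iff, forall_pow_eq_one_imp_eq_one_iff_coprime, hcard,
    Nat.coprime_two_pow_sub_one_iff]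

theorem papn_of_gold (n d : ℕ) (hn : 0 < n) (hd : 0 < d) :
    IsPAPN n (fun x : GaloisField 2 n => x ^ (2 ^ d + 1)) 0 ↔ Nat.gcd d n = 1 :=
  papn_of_gold_general n d hn
end

section
/- Let k be a positive integer and let F : F_{2^n} → F_{2^n} be the power function F(x) = x^k. If F is 1-APN (partially APN at the point 1 ∈ F_{2^n}), then F is APN. -/
open scoped Classical

theorem power_one_papn_is_apn (n k : ℕ) (hk : 0 < k)
    (h : IsPAPN n (fun x : GaloisField 2 n => x ^ k) 1) :
    IsAPN n (fun x : GaloisField 2 n => x ^ k) := by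
  intro a b ha
  by_contra hcard
  push_neg at hcard
  rw [Nat.card_eq_fintype_card, Fintype.two_lt_card_iff] at hcard
  obtain ⟨⟨x, hx⟩, ⟨y, hy⟩, ⟨z, hz⟩, hxy, hxz, hyz⟩ := hcard
  simp only [ne_eq, Subtype.mk.injEq] at hxy hxz hyz hx hy hz
  have h2 : ∀ w : GaloisField 2 n, w + w = 0 := fun w => CharTwo.add_self_eq_zero w
  -- core: two solutions p q with p ≠ 0, q ≠ p, q ≠ p + a gives a contradiction
  have core : ∀ p q : GaloisField 2 n, p ≠ 0 → (p + a) ^ k + p ^ k = b →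
      (q + a) ^ k + q ^ k = b → q ≠ p → q ≠ p + a → False := by
    intro p q hp0 hp hq hqp hqpa
    have hpi : p * p⁻¹ = 1 := mul_inv_cancel₀ hp0
    have h1uv : 1 + (p + a) * p⁻¹ + q * p⁻¹ = (q + a) * p⁻¹ := by
      linear_combination p⁻¹ * h2 p - hpi
    have hsum : (1 : GaloisField 2 n) ^ k + ((p + a) * p⁻¹) ^ k + (q * p⁻¹) ^ k
        + (1 + (p + a) * p⁻¹ + q * p⁻¹) ^ k = 0 := by
      rw [h1uv, ← hpi]
      simp only [mul_pow]
      linear_combination (p⁻¹) ^ k * hp + (p⁻¹) ^ k * hq + (p⁻¹) ^ k * h2 b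
    have hres := h ((p + a) * p⁻¹) (q * p⁻¹) (by simpa using hsum)
    have hA : 1 + (p + a) * p⁻¹ = a * p⁻¹ := by
      linear_combination p⁻¹ * h2 p - hpi
    have hB : 1 + q * p⁻¹ = (p + q) * p⁻¹ := by
      linear_combination -hpi
    have hC : (p + a) * p⁻¹ + q * p⁻¹ = (p + a + q) * p⁻¹ := by ring
    rw [hA, hB, hC] at hres
    have hpq : p + q ≠ 0 := by
      intro heq
      exact hqp (by linear_combination heq - h2 p)
    have hpaq : p + a + q ≠ 0 := by
      intro heq
      exact hqpa (by linear_combination heq - h2 p - h2 a)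
    exact mul_ne_zero (mul_ne_zero (mul_ne_zero ha (inv_ne_zero hp0))
      (mul_ne_zero hpq (inv_ne_zero hp0))) (mul_ne_zero hpaq (inv_ne_zero hp0)) hres
  -- allow p = 0 by replacing p with p + a
  have key : ∀ p q : GaloisField 2 n, (p + a) ^ k + p ^ k = b →
      (q + a) ^ k + q ^ k = b → q ≠ p → q ≠ p + a → False := by
    intro p q hp hq hqp hqpa
    by_cases hp0 : p = 0
    · refine core (p + a) q (by simp [hp0, ha]) ?_ hq hqpa ?_
      · have : p + a + a = p := by linear_combination h2 a
        rw [this]; linear_combination hp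
      · have : p + a + a = p := by linear_combination h2 a
        rw [this]; exact hqp
    · exact core p q hp0 hp hq hqp hqpa
  by_cases hcase : y = x + a
  · exact key x z hx hz (fun e => hxz e.symm) (fun e => hyz (hcase.trans e.symm))
  · exact key x y hx hy (fun e => hxy e.symm) hcase
end

section
/- Let F : F_{2^n} → F_{2^n} be quadratic, i.e., for every a ∈ F_{2^n} the derivative D_aF(x) = F(x+a) + F(x) is an affine function of x (meaning that the map x ↦ F(x+a) + F(x) + F(a) + F(0) is additive: it sends x + y to the sum of its values at x and at y). Then for any fixed x_0 ∈ F_{2^n}, F is x_0-APN if and only if F is APN. -/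
open scoped Classical

theorem quadratic_papn_iff_apn (n : ℕ) (F : GaloisField 2 n → GaloisField 2 n)
    (hquad : ∀ a x y : GaloisField 2 n,
      F (x + y + a) + F (x + y) + F a + F 0 =
        (F (x + a) + F x + F a + F 0) + (F (y + a) + F y + F a + F 0))
    (x₀ : GaloisField 2 n) :
    IsPAPN n F x₀ ↔ IsAPN n F := by
  have h2 : (2 : GaloisField 2 n) = 0 := by
    have := CharP.cast_eq_zero (GaloisField 2 n) 2
    simpa using this
  have bilin : ∀ w s t : GaloisField 2 n,
      F (w + s + t) + F (w + s) + F (w + t) + F w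
        = F (s + t) + F s + F t + F 0 := by
    intro w s t
    linear_combination hquad t w s + (F (w + t) + F w) * h2
  constructor
  · -- pAPN → APN
    intro hp a b ha
    have key : ∀ x y : GaloisField 2 n,
        F (x + a) + F x = b → F (y + a) + F y = b → y = x ∨ y = x + a := by
      intro x y hx hy
      have hxy : x + (y + x) = y := by linear_combination x * h2
      have hb := bilin x (y + x) a
      rw [hxy] at hb
      -- hb : F (y + a) + F y + F (x + a) + F x = F (y + x + a) + F (y + x) + F a + F 0
      have hs : F (y + x + a) + F (y + x) + F a + F 0 = 0 := by
        linear_combination -hb + hx + hy + b * h2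
      have harg : x₀ + (x₀ + (y + x)) + (x₀ + a) = x₀ + (y + x) + a := by
        linear_combination x₀ * h2
      have hcond : F x₀ + F (x₀ + (y + x)) + F (x₀ + a)
          + F (x₀ + (x₀ + (y + x)) + (x₀ + a)) = 0 := by
        rw [harg]
        linear_combination bilin x₀ (y + x) a + hs
      have := hp (x₀ + (y + x)) (x₀ + a) hcond
      have e1 : x₀ + (x₀ + (y + x)) = y + x := by linear_combination x₀ * h2
      have e2 : x₀ + (x₀ + a) = a := by linear_combination x₀ * h2
      have e3 : x₀ + (y + x) + (x₀ + a) = y + x + a := by linear_combination x₀ * h2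
      rw [e1, e2, e3] at this
      have hfac : (y + x) * a * (y + x + a) = 0 := this
      rcases mul_eq_zero.mp hfac with hfac | hfac
      · rcases mul_eq_zero.mp hfac with hfac | hfac
        · left; linear_combination hfac - x * h2
        · exact absurd hfac ha
      · right; linear_combination hfac - (x + a) * h2
    by_cases hS : ∃ x : GaloisField 2 n, F (x + a) + F x = b
    · obtain ⟨x, hx⟩ := hS
      have hinj : Function.Injective
          (fun z : {x : GaloisField 2 n // F (x + a) + F x = b} =>
            (if z.1 = x then 0 else 1 : Fin 2)) := by
        intro z1 z2 hz
        simp only at hz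
        by_cases h1 : z1.1 = x <;> by_cases h2' : z2.1 = x
        · exact Subtype.ext (h1.trans h2'.symm)
        · simp [h1, h2'] at hz
        · simp [h1, h2'] at hz
        · have e1 := (key x z1.1 hx z1.2).resolve_left h1
          have e2 := (key x z2.1 hx z2.2).resolve_left h2'
          exact Subtype.ext (e1.trans e2.symm)
      calc Nat.card {x : GaloisField 2 n // F (x + a) + F x = b}
          ≤ Nat.card (Fin 2) := Nat.card_le_card_of_injective _ hinj
        _ = 2 := by simp
    · push_neg at hS
      have : IsEmpty {x : GaloisField 2 n // F (x + a) + F x = b} :=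
        ⟨fun z => hS z.1 z.2⟩
      simp [Nat.card_of_isEmpty]
  · -- APN → pAPN
    intro hA u v h
    by_contra hne
    have h1 : x₀ + u ≠ 0 := fun h' => hne (by rw [h']; ring)
    have h2' : x₀ + v ≠ 0 := fun h' => hne (by rw [h']; ring)
    have h3 : u + v ≠ 0 := fun h' => hne (by rw [h']; ring)
    set a := u + v with hadef
    have hu : F (u + a) + F u = F u + F v := by
      have : u + a = v := by rw [hadef]; linear_combination u * h2
      rw [this]; ring
    have hv : F (v + a) + F v = F u + F v := by
      have : v + a = u := by rw [hadef]; linear_combination v * h2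
      rw [this]
    have hx0 : F (x₀ + a) + F x₀ = F u + F v := by
      have : x₀ + a = x₀ + u + v := by rw [hadef]; ring
      rw [this]
      linear_combination h - (F u + F v) * h2
    have huv : u ≠ v := fun h' => h3 (by rw [hadef, h']; linear_combination v * h2)
    have hux : u ≠ x₀ := fun h' => h1 (by rw [h']; linear_combination x₀ * h2)
    have hvx : v ≠ x₀ := fun h' => h2' (by rw [h']; linear_combination x₀ * h2)
    have hinj : Function.Injective
        (fun i : Fin 3 =>
          (![⟨u, hu⟩, ⟨v, hv⟩, ⟨x₀, hx0⟩] i :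
            {x : GaloisField 2 n // F (x + a) + F x = F u + F v})) := by
      intro i j hij
      fin_cases i <;> fin_cases j <;>
        simp_all [Subtype.ext_iff] <;> tauto
    have h3le : 3 ≤ Nat.card {x : GaloisField 2 n // F (x + a) + F x = F u + F v} := by
      calc (3:ℕ) = Nat.card (Fin 3) := by simp
        _ ≤ _ := Nat.card_le_card_of_injective _ hinj
    have := hA a (F u + F v) h3
    omega
end
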